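/- arXiv:1706.01928 — 2 statements merged into one kernel-verified Lean document; each statement's English description precedes it below -/
import Mathlib

section
/- Let ν ≥ 0 with ν ≠ 1, let x > 0, and let g : (0,∞) → ℝ be twice continuously differentiable with g(y) → 0 and g'(y) → 0 as y → ∞; assume moreover that the functions y ↦ y·|(B_ν g)(y)|, y ↦ y^ν·|(B_ν g)(y)| and y ↦ y^{ν−2}·|g(y)| are integrable on (x, ∞). Then the fractional Bessel integral of order 1 is a left inverse of the Bessel operator: (IB_{ν,-}^1 (B_ν g))(x) = g(x). -/
open MeasureTheory Set Filter

/-- Gauss hypergeometric function ₂F₁(a,b;c;z) defined by its power series. -/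
noncomputable def gaussHyp (a b c z : ℝ) : ℝ :=
  ∑' n : ℕ, ((ascPochhammer ℝ n).eval a * (ascPochhammer ℝ n).eval b /
    ((ascPochhammer ℝ n).eval c * (n.factorial : ℝ))) * z ^ n

/-- Fractional Bessel integral on the semiaxis. -/
noncomputable def IB (ν α : ℝ) (f : ℝ → ℝ) (x : ℝ) : ℝ :=
  (1 / Real.Gamma (2 * α)) *
    ∫ y in Ioi x, ((y ^ 2 - x ^ 2) / (2 * y)) ^ (2 * α - 1) *
      gaussHyp (α + (ν - 1) / 2) α (2 * α) (1 - x ^ 2 / y ^ 2) * f y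

/-- Bessel operator B_ν g = g'' + (ν/x) g'. -/
noncomputable def besselOp (ν : ℝ) (g : ℝ → ℝ) (x : ℝ) : ℝ :=
  deriv (deriv g) x + (ν / x) * deriv g x

open scoped Nat Topology

/-!
For `α = 1` the hypergeometric factor is elementary: by the binomial series
`s z ₂F₁(s + 1, 1; 2; z) = (1 - z)^(-s) - 1`, so the kernel of `IB_{ν,-}^1` at `(x, y)` is
`(y - x^(1-ν) y^ν) / (1 - ν)`. Since `(y g' - (1 - ν) g)' = y B_ν g` and
`(y^ν g')' = y^ν B_ν g`, the kernel times `B_ν g` is the derivative of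
`Φ(y) = (y g' - (1 - ν) g - x^(1-ν) y^ν g') / (1 - ν)`, and `Φ(x) = -g(x)`.
So it remains to show `Φ → 0`, i.e. `y g' → 0` and `y^ν g' → 0`. Both `y g' - (1 - ν) g` and
`y^ν g'` converge, their derivatives being integrable, and a nonzero limit of `y^q g'` makes `g'`
comparable to `y^(-q)`: for `q ≤ 1` this contradicts `g → 0`, for `q > 1` the resulting bound
`|g y| ≳ y^(1-q)` contradicts the integrability of `y^(q-2) |g y|`.
-/

theorem hasSum_ascPochhammer_div_factorial_mul_pow (s : ℝ) {z : ℝ} (hz : |z| < 1) :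
    HasSum (fun n : ℕ => (ascPochhammer ℝ n).eval s / n ! * z ^ n) ((1 - z) ^ (-s)) := by
  have h := (Real.one_div_one_sub_rpow_hasFPowerSeriesOnBall_zero s).hasSum
    (y := z) (by simpa [enorm_eq_nnnorm, ← NNReal.coe_lt_one] using hz)
  rw [zero_add, one_div, ← Real.rpow_neg (by linarith [le_abs_self z])] at h
  simp only [FormalMultilinearSeries.ofScalars_apply_eq, smul_eq_mul] at h
  have hcoeff (n : ℕ) : Ring.choose (s + n - 1) n = (ascPochhammer ℝ n).eval s / n ! := by
    rw [← Ring.multichoose_eq, ← Polynomial.ascPochhammer_smeval_eq_eval,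
      ← Ring.factorial_nsmul_multichoose_eq_ascPochhammer, nsmul_eq_mul,
      mul_div_cancel_left₀ _ (by positivity)]
  simpa only [hcoeff] using h

theorem mul_gaussHyp_add_one_one_two (s : ℝ) {z : ℝ} (hz : |z| < 1) :
    s * z * gaussHyp (s + 1) 1 2 z = (1 - z) ^ (-s) - 1 := by
  have h := (hasSum_nat_add_iff' 1).mpr (hasSum_ascPochhammer_div_factorial_mul_pow s hz)
  simp only [Finset.range_one, Finset.sum_singleton, ascPochhammer_zero, Polynomial.eval_one,
    Nat.factorial_zero, Nat.cast_one, div_one, pow_zero, mul_one] at h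
  rw [gaussHyp, ← tsum_mul_left, ← h.tsum_eq]
  congr 1 with n
  have h2 : (ascPochhammer ℝ n).eval 2 = (n + 1)! := by
    simpa [one_add_one_eq_two, add_comm] using factorial_mul_ascPochhammer ℝ 1 n
  rw [ascPochhammer_eval_one, h2, ascPochhammer_succ_left, Polynomial.eval_mul,
    Polynomial.eval_comp]
  simp only [Polynomial.eval_X, Polynomial.eval_add, Polynomial.eval_one]
  field_simp
  ring

theorem besselKernel_one_eq {ν x y : ℝ} (hν : ν ≠ 1) (hx : 0 < x) (hxy : x < y) :
    (y ^ 2 - x ^ 2) / (2 * y) * gaussHyp ((ν - 1) / 2 + 1) 1 2 (1 - x ^ 2 / y ^ 2)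
      = (y - x ^ (1 - ν) * y ^ ν) / (1 - ν) := by
  have hy : 0 < y := hx.trans hxy
  have hratio : 0 < x ^ 2 / y ^ 2 ∧ x ^ 2 / y ^ 2 < 1 :=
    ⟨by positivity, (div_lt_one (by positivity)).2 (by nlinarith)⟩
  have key := mul_gaussHyp_add_one_one_two ((ν - 1) / 2) (z := 1 - x ^ 2 / y ^ 2)
    (abs_lt.2 ⟨by linarith, by linarith⟩)
  have hpow : (x ^ 2 / y ^ 2) ^ (-((ν - 1) / 2)) = x ^ (1 - ν) * y ^ ν / y := by
    rw [← div_pow, ← Real.rpow_natCast, ← Real.rpow_mul (by positivity),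
      Real.div_rpow hx.le hy.le, Nat.cast_ofNat, show (2 : ℝ) * -((ν - 1) / 2) = 1 - ν by ring,
      Real.rpow_sub hy, Real.rpow_one]
    field_simp
  rw [sub_sub_cancel, hpow] at key
  have hν' : ν - 1 ≠ 0 := sub_ne_zero.2 hν
  set F := gaussHyp ((ν - 1) / 2 + 1) 1 2 (1 - x ^ 2 / y ^ 2)
  calc (y ^ 2 - x ^ 2) / (2 * y) * F = y / (ν - 1) * ((ν - 1) / 2 * (1 - x ^ 2 / y ^ 2) * F) := by
        field_simp
    _ = (y - x ^ (1 - ν) * y ^ ν) / (1 - ν) := by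
        rw [key, show 1 - ν = -(ν - 1) by ring]
        field_simp
        ring

theorem IB_one_eq {ν x : ℝ} (hν : ν ≠ 1) (hx : 0 < x) (f : ℝ → ℝ) :
    IB ν 1 f x = ∫ y in Ioi x, (y - x ^ (1 - ν) * y ^ ν) / (1 - ν) * f y := by
  rw [IB, mul_one, Real.Gamma_two, div_one, one_mul, show (2 : ℝ) - 1 = 1 by norm_num]
  refine setIntegral_congr_fun measurableSet_Ioi fun y (hy : x < y) => ?_
  rw [Real.rpow_one, add_comm 1, ← besselKernel_one_eq hν hx hy]

theorem not_integrableOn_Ioi_of_rpow_le {f : ℝ → ℝ} {a c s : ℝ} (ha : 0 < a) (hc : 0 < c)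
    (hs : -1 ≤ s) (hle : ∀ x ∈ Ioi a, c * x ^ s ≤ f x) : ¬IntegrableOn f (Ioi a) := by
  intro hf
  have hrpow : IntegrableOn (fun x => x ^ s) (Ioi a) := by
    refine (hf.const_mul c⁻¹).mono' ?_ ?_
    · exact (ContinuousOn.rpow_const continuousOn_id fun x (hx : a < x) =>
        Or.inl (ha.trans hx).ne').aestronglyMeasurable measurableSet_Ioi
    · filter_upwards [ae_restrict_mem measurableSet_Ioi] with x (hx : a < x)
      rw [Real.norm_eq_abs, abs_of_pos (Real.rpow_pos_of_pos (ha.trans hx) s),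
        le_inv_mul_iff₀ hc]
      exact hle x hx
  linarith [(integrableOn_Ioi_rpow_iff ha).1 hrpow]

theorem exists_rpow_neg_le_of_tendsto_rpow_mul {g' : ℝ → ℝ} {q M : ℝ} (hM : 0 < M)
    (hlim : Tendsto (fun x => x ^ q * g' x) atTop (𝓝 M)) (a : ℝ) :
    ∃ Y, a < Y ∧ 0 < Y ∧ ∀ x ∈ Ioi Y, M / 2 * x ^ (-q) ≤ g' x := by
  have hbound : ∀ᶠ x in atTop, M / 2 * x ^ (-q) ≤ g' x := by
    filter_upwards [hlim.eventually (eventually_gt_nhds (half_lt_self hM)),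
      eventually_gt_atTop 0] with x hx hx0
    rw [Real.rpow_neg hx0.le, ← div_eq_mul_inv, div_le_iff₀ (Real.rpow_pos_of_pos hx0 q)]
    linarith
  obtain ⟨Y, hY⟩ := eventually_atTop.1 (hbound.and (eventually_gt_atTop (max a 0)))
  exact ⟨Y, (le_max_left _ _).trans_lt (hY Y le_rfl).2,
    (le_max_right _ _).trans_lt (hY Y le_rfl).2, fun x hx => (hY x hx.out.le).1⟩

theorem eq_zero_of_tendsto_rpow_mul_deriv_of_le_one {g g' : ℝ → ℝ} {a l q M : ℝ}
    (hq : q ≤ 1) (hderiv : ∀ x ∈ Ioi a, HasDerivAt g (g' x) x) (hg : Tendsto g atTop (𝓝 l))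
    (hlim : Tendsto (fun x => x ^ q * g' x) atTop (𝓝 M)) : M = 0 := by
  by_contra hM0
  wlog hM : 0 < M generalizing g g' l M
  · refine this (g := -g) (g' := -g') (fun x hx => (hderiv x hx).neg) hg.neg ?_
      (neg_ne_zero.2 hM0) (neg_pos.2 (lt_of_le_of_ne (not_lt.1 hM) hM0))
    simpa only [Pi.neg_apply, mul_neg] using hlim.neg
  obtain ⟨Y, hYa, hY0, hbound⟩ := exists_rpow_neg_le_of_tendsto_rpow_mul hM hlim a
  refine not_integrableOn_Ioi_of_rpow_le hY0 (half_pos hM) (by linarith) hbound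
    (integrableOn_Ioi_deriv_of_nonneg' (fun x hx => hderiv x (hYa.trans_le hx))
      (fun x hx => le_trans ?_ (hbound x hx)) hg)
  exact (mul_pos (half_pos hM) (Real.rpow_pos_of_pos (hY0.trans hx) _)).le

theorem rpow_le_neg_of_rpow_neg_le_deriv {g g' : ℝ → ℝ} {x c q : ℝ} (hq : 1 < q)
    (hx : 0 < x) (hc : 0 < c) (hderiv : ∀ t ∈ Ici x, HasDerivAt g (g' t) t)
    (hg : Tendsto g atTop (𝓝 0)) (hle : ∀ t ∈ Ioi x, c * t ^ (-q) ≤ g' t) :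
    c / (q - 1) * x ^ (1 - q) ≤ -g x := by
  have hnonneg : ∀ t ∈ Ioi x, 0 ≤ g' t := fun t (ht : x < t) =>
    (mul_pos hc (Real.rpow_pos_of_pos (hx.trans ht) _)).le.trans (hle t ht)
  have hmono : ∫ t in Ioi x, c * t ^ (-q) ≤ ∫ t in Ioi x, g' t :=
    setIntegral_mono_on ((integrableOn_Ioi_rpow_of_lt (by linarith) hx).const_mul _)
      (integrableOn_Ioi_deriv_of_nonneg' hderiv hnonneg hg) measurableSet_Ioi hle
  rw [integral_const_mul, integral_Ioi_rpow_of_lt (by linarith) hx,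
    integral_Ioi_of_hasDerivAt_of_nonneg' hderiv hnonneg hg, zero_sub] at hmono
  have hq' : q - 1 ≠ 0 := by linarith
  convert hmono using 1
  rw [show -q + 1 = -(q - 1) by ring, show 1 - q = -(q - 1) by ring]
  field_simp

theorem eq_zero_of_tendsto_rpow_mul_deriv_of_one_lt {g g' : ℝ → ℝ} {a q M : ℝ} (hq : 1 < q)
    (hderiv : ∀ x ∈ Ioi a, HasDerivAt g (g' x) x) (hg : Tendsto g atTop (𝓝 0))
    (hint : IntegrableOn (fun x => x ^ (q - 2) * |g x|) (Ioi a))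
    (hlim : Tendsto (fun x => x ^ q * g' x) atTop (𝓝 M)) : M = 0 := by
  by_contra hM0
  wlog hM : 0 < M generalizing g g' M
  · refine this (g := -g) (g' := -g') (fun x hx => (hderiv x hx).neg)
      (by rw [← neg_zero]; exact hg.neg) (by simpa using hint) ?_
      (neg_ne_zero.2 hM0) (neg_pos.2 (lt_of_le_of_ne (not_lt.1 hM) hM0))
    simpa only [Pi.neg_apply, mul_neg] using hlim.neg
  obtain ⟨Y, hYa, hY0, hbound⟩ := exists_rpow_neg_le_of_tendsto_rpow_mul hM hlim a
  refine not_integrableOn_Ioi_of_rpow_le (c := M / 2 / (q - 1)) hY0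
    (div_pos (half_pos hM) (by linarith)) le_rfl (fun x (hx : Y < x) => ?_)
    (hint.mono_set (Ioi_subset_Ioi hYa.le))
  have hx0 : 0 < x := hY0.trans hx
  have hg_le := rpow_le_neg_of_rpow_neg_le_deriv hq hx0 (half_pos hM)
    (fun t ht => hderiv t (hYa.trans (hx.trans_le ht))) hg
    (fun t (ht : x < t) => hbound t (hx.trans ht))
  calc M / 2 / (q - 1) * x ^ (-1 : ℝ) = x ^ (q - 2) * (M / 2 / (q - 1) * x ^ (1 - q)) := by
        rw [mul_left_comm, ← Real.rpow_add hx0]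
        ring_nf
    _ ≤ x ^ (q - 2) * |g x| :=
        mul_le_mul_of_nonneg_left (hg_le.trans (neg_le_abs _)) (Real.rpow_nonneg hx0.le _)

theorem tendsto_rpow_mul_of_le {h : ℝ → ℝ} {p q : ℝ} (hqp : q ≤ p)
    (hh : Tendsto (fun t => t ^ p * h t) atTop (𝓝 0)) :
    Tendsto (fun t => t ^ q * h t) atTop (𝓝 0) := by
  refine squeeze_zero_norm' ?_ (by simpa only [norm_zero] using hh.norm)
  filter_upwards [eventually_ge_atTop 1] with t ht
  have ht0 : 0 ≤ t := by linarith
  rw [norm_mul, norm_mul, Real.norm_of_nonneg (Real.rpow_nonneg ht0 q),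
    Real.norm_of_nonneg (Real.rpow_nonneg ht0 p)]
  exact mul_le_mul_of_nonneg_right (Real.rpow_le_rpow_of_exponent_le ht hqp) (norm_nonneg _)

theorem integrableOn_mul_of_integrableOn_mul_abs {w f : ℝ → ℝ} {a : ℝ}
    (hw : ContinuousOn w (Ioi a)) (hw0 : ∀ y ∈ Ioi a, 0 ≤ w y) (hf : ContinuousOn f (Ioi a))
    (h : IntegrableOn (fun y => w y * |f y|) (Ioi a)) :
    IntegrableOn (fun y => w y * f y) (Ioi a) := by
  refine h.mono' ((hw.mul hf).aestronglyMeasurable measurableSet_Ioi) ?_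
  filter_upwards [ae_restrict_mem measurableSet_Ioi] with y hy
  rw [norm_mul, Real.norm_of_nonneg (hw0 y hy), Real.norm_eq_abs]

section BesselOperator

variable {ν : ℝ} {g : ℝ → ℝ}

theorem hasDerivAt_of_contDiffOn_two (hg : ContDiffOn ℝ 2 g (Ioi 0)) {y : ℝ} (hy : 0 < y) :
    HasDerivAt g (deriv g y) y :=
  ((hg.differentiableOn (by norm_num)).differentiableAt (Ioi_mem_nhds hy)).hasDerivAt

theorem hasDerivAt_deriv_of_contDiffOn_two (hg : ContDiffOn ℝ 2 g (Ioi 0)) {y : ℝ}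
    (hy : 0 < y) : HasDerivAt (deriv g) (deriv (deriv g) y) y :=
  (((hg.deriv_of_isOpen isOpen_Ioi (by norm_num)).differentiableOn one_ne_zero).differentiableAt
    (Ioi_mem_nhds hy)).hasDerivAt

theorem continuousOn_besselOp (hg : ContDiffOn ℝ 2 g (Ioi 0)) :
    ContinuousOn (besselOp ν g) (Ioi 0) := by
  have hg' : ContDiffOn ℝ 1 (deriv g) (Ioi 0) := hg.deriv_of_isOpen isOpen_Ioi (by norm_num)
  exact (hg'.continuousOn_deriv_of_isOpen isOpen_Ioi le_rfl).add
    ((continuousOn_const.div continuousOn_id fun y hy => (ne_of_gt hy)).mul hg'.continuousOn)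

theorem hasDerivAt_rpow_mul_deriv (hg : ContDiffOn ℝ 2 g (Ioi 0)) {y : ℝ} (hy : 0 < y) :
    HasDerivAt (fun t => t ^ ν * deriv g t) (y ^ ν * besselOp ν g y) y := by
  refine ((Real.hasDerivAt_rpow_const (p := ν) (Or.inl hy.ne')).mul
    (hasDerivAt_deriv_of_contDiffOn_two hg hy)).congr_deriv ?_
  rw [besselOp, Real.rpow_sub hy, Real.rpow_one]
  field_simp
  ring

theorem hasDerivAt_mul_deriv_sub (hg : ContDiffOn ℝ 2 g (Ioi 0)) {y : ℝ} (hy : 0 < y) :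
    HasDerivAt (fun t => t * deriv g t - (1 - ν) * g t) (y * besselOp ν g y) y := by
  refine (((hasDerivAt_id y).mul (hasDerivAt_deriv_of_contDiffOn_two hg hy)).sub
    ((hasDerivAt_of_contDiffOn_two hg hy).const_mul (1 - ν))).congr_deriv ?_
  rw [besselOp, id]
  field_simp
  ring

theorem tendsto_mul_deriv_atTop_zero (hg : ContDiffOn ℝ 2 g (Ioi 0))
    (hg0 : Tendsto g atTop (𝓝 0)) {x : ℝ} (hx : 0 < x)
    (hint : IntegrableOn (fun y => y * besselOp ν g y) (Ioi x)) :
    Tendsto (fun t => t * deriv g t) atTop (𝓝 0) := by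
  have hV := tendsto_limUnder_of_hasDerivAt_of_integrableOn_Ioi
    (fun y (hy : x < y) => hasDerivAt_mul_deriv_sub (ν := ν) hg (hx.trans hy)) hint
  have hlim : Tendsto (fun t => t ^ (1 : ℝ) * deriv g t) atTop (𝓝 (limUnder atTop
      (fun t => t * deriv g t - (1 - ν) * g t))) := by
    simpa using hV.add (hg0.const_mul (1 - ν))
  have hzero := eq_zero_of_tendsto_rpow_mul_deriv_of_le_one le_rfl
    (fun y (hy : 0 < y) => hasDerivAt_of_contDiffOn_two hg hy) hg0 hlim
  simpa [hzero] using hlim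

theorem tendsto_rpow_mul_deriv_atTop_zero (hg : ContDiffOn ℝ 2 g (Ioi 0))
    (hg0 : Tendsto g atTop (𝓝 0)) {x : ℝ} (hx : 0 < x)
    (hint1 : IntegrableOn (fun y => y * besselOp ν g y) (Ioi x))
    (hint2 : IntegrableOn (fun y => y ^ ν * besselOp ν g y) (Ioi x))
    (hint3 : IntegrableOn (fun y => y ^ (ν - 2) * |g y|) (Ioi x)) :
    Tendsto (fun t => t ^ ν * deriv g t) atTop (𝓝 0) := by
  rcases le_or_gt ν 1 with hν | hν
  · exact tendsto_rpow_mul_of_le hν (by simpa using tendsto_mul_deriv_atTop_zero hg hg0 hx hint1)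
  · have hW := tendsto_limUnder_of_hasDerivAt_of_integrableOn_Ioi
      (fun y (hy : x < y) => hasDerivAt_rpow_mul_deriv hg (hx.trans hy)) hint2
    rwa [eq_zero_of_tendsto_rpow_mul_deriv_of_one_lt hν
      (fun y (hy : x < y) => hasDerivAt_of_contDiffOn_two hg (hx.trans hy)) hg0 hint3 hW] at hW

theorem hasDerivAt_besselOp_primitive (hg : ContDiffOn ℝ 2 g (Ioi 0)) (x : ℝ) {y : ℝ}
    (hy : 0 < y) :
    HasDerivAt
      (fun t => (t * deriv g t - (1 - ν) * g t - x ^ (1 - ν) * (t ^ ν * deriv g t)) / (1 - ν))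
      ((y - x ^ (1 - ν) * y ^ ν) / (1 - ν) * besselOp ν g y) y := by
  refine (((hasDerivAt_mul_deriv_sub hg hy).sub
    ((hasDerivAt_rpow_mul_deriv hg hy).const_mul _)).div_const _).congr_deriv ?_
  ring

theorem integral_besselKernel_mul_besselOp (hν : ν ≠ 1) (hg : ContDiffOn ℝ 2 g (Ioi 0))
    (hg0 : Tendsto g atTop (𝓝 0)) {x : ℝ} (hx : 0 < x)
    (hint1 : IntegrableOn (fun y => y * besselOp ν g y) (Ioi x))
    (hint2 : IntegrableOn (fun y => y ^ ν * besselOp ν g y) (Ioi x))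
    (hint3 : IntegrableOn (fun y => y ^ (ν - 2) * |g y|) (Ioi x)) :
    ∫ y in Ioi x, (y - x ^ (1 - ν) * y ^ ν) / (1 - ν) * besselOp ν g y = g x := by
  have hlim : Tendsto (fun t => (t * deriv g t - (1 - ν) * g t
      - x ^ (1 - ν) * (t ^ ν * deriv g t)) / (1 - ν)) atTop (𝓝 0) := by
    simpa using (((tendsto_mul_deriv_atTop_zero hg hg0 hx hint1).sub (hg0.const_mul (1 - ν))).sub
      ((tendsto_rpow_mul_deriv_atTop_zero hg hg0 hx hint1 hint2 hint3).const_mul _)).div_const _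
  have hkernel : IntegrableOn
      (fun y => (y - x ^ (1 - ν) * y ^ ν) / (1 - ν) * besselOp ν g y) (Ioi x) :=
    IntegrableOn.congr_fun ((hint1.sub (hint2.const_mul (x ^ (1 - ν)))).div_const (1 - ν))
      (fun y _ => by simp only [Pi.sub_apply]; ring) measurableSet_Ioi
  rw [integral_Ioi_of_hasDerivAt_of_tendsto'
    (fun y hy => hasDerivAt_besselOp_primitive hg x (hx.trans_le hy)) hkernel hlim,
    ← mul_assoc, ← Real.rpow_add hx, sub_add_cancel, Real.rpow_one]
  field_simp [sub_ne_zero.2 hν.symm]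
  ring

end BesselOperator

theorem IB_one_left_inverse_general (ν : ℝ) (hν1 : ν ≠ 1) (x : ℝ) (hx : 0 < x)
    (g : ℝ → ℝ) (hg : ContDiffOn ℝ 2 g (Ioi (0 : ℝ)))
    (hg0 : Tendsto g atTop (nhds 0))
    (hint1 : IntegrableOn (fun y => y * |besselOp ν g y|) (Ioi x))
    (hint2 : IntegrableOn (fun y => y ^ ν * |besselOp ν g y|) (Ioi x))
    (hint3 : IntegrableOn (fun y => y ^ (ν - 2) * |g y|) (Ioi x)) :
    IB ν 1 (besselOp ν g) x = g x := by
  have hpos : ∀ y ∈ Ioi x, 0 < y := fun y hy => hx.trans hy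
  have hf := (continuousOn_besselOp (ν := ν) hg).mono (Ioi_subset_Ioi hx.le)
  have hI1 : IntegrableOn (fun y => y * besselOp ν g y) (Ioi x) :=
    integrableOn_mul_of_integrableOn_mul_abs continuousOn_id (fun y hy => (hpos y hy).le) hf hint1
  have hI2 : IntegrableOn (fun y => y ^ ν * besselOp ν g y) (Ioi x) :=
    integrableOn_mul_of_integrableOn_mul_abs
      (continuousOn_id.rpow_const fun y hy => Or.inl (hpos y hy).ne')
      (fun y hy => Real.rpow_nonneg (hpos y hy).le ν) hf hint2
  rw [IB_one_eq hν1 hx]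
  exact integral_besselKernel_mul_besselOp hν1 hg hg0 hx hI1 hI2 hint3

theorem IB_one_left_inverse (ν : ℝ) (hν : 0 ≤ ν) (hν1 : ν ≠ 1) (x : ℝ) (hx : 0 < x)
    (g : ℝ → ℝ) (hg : ContDiffOn ℝ 2 g (Ioi (0 : ℝ)))
    (hg0 : Tendsto g atTop (nhds 0)) (hg0' : Tendsto (deriv g) atTop (nhds 0))
    (hint1 : IntegrableOn (fun y => y * |besselOp ν g y|) (Ioi x))
    (hint2 : IntegrableOn (fun y => y ^ ν * |besselOp ν g y|) (Ioi x))
    (hint3 : IntegrableOn (fun y => y ^ (ν - 2) * |g y|) (Ioi x)) :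
    IB ν 1 (besselOp ν g) x = g x :=
  IB_one_left_inverse_general ν hν1 x hx g hg hg0 hint1 hint2 hint3
end

section
/- Let ν ≥ 0, α > 0, x > 0, and let f : (0,∞) → ℝ be continuous with compact support contained in (0,∞). Then the fractional Bessel integral coincides, after the substitution y² = t, with 2^{−2α} times the Saigo fractional integral J_{x²}^{2α, (ν−1)/2−α, −α} applied to t ↦ t^{(ν−1)/2} f(√t); explicitly, (IB_{ν,-}^α f)(x) = (2^{−2α}/Γ(2α)) ∫_{x²}^∞ (t − x²)^{2α−1} t^{−α} ₂F₁(α + (ν−1)/2, α; 2α; 1 − x²/t) f(√t) dt. -/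
open MeasureTheory Set

/-- Saigo fractional integral J_x^{γ,β,η}. -/
noncomputable def saigo (γ β η : ℝ) (f : ℝ → ℝ) (x : ℝ) : ℝ :=
  (1 / Real.Gamma γ) *
    ∫ t in Ioi x, (t - x) ^ (γ - 1) * t ^ (-γ - β) *
      gaussHyp (γ + β) (-η) γ (1 - x / t) * f t

/-!
Substituting t = y² turns dy into dt / (2y), and the Bessel kernel splits as
((y² - x²) / (2y))^(2α-1) = 2^(-2α) · 2y · (y² - x²)^(2α-1) · (y²)^(-α);
the factor 2y cancels the Jacobian, which leaves 2^(-2α) times the integral in t. Pulling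
t^((ν-1)/2) into the power of t identifies that integral with the Saigo integral.
-/

theorem integral_comp_sq_Ioi {E : Type*} [NormedAddCommGroup E] [NormedSpace ℝ E]
    (g : ℝ → E) {a : ℝ} (ha : 0 ≤ a) :
    ∫ y in Ioi a, (2 * y) • g (y ^ 2) = ∫ t in Ioi (a ^ 2), g t := by
  have h := integral_comp_rpow_Ioi_of_pos' (g := g) two_pos (sq_nonneg a)
  have ha' : (a ^ 2) ^ (2⁻¹ : ℝ) = a := by
    simpa using Real.pow_rpow_inv_natCast ha two_ne_zero
  simpa only [ha', Real.rpow_two, show (2 : ℝ) - 1 = 1 by norm_num, Real.rpow_one] using h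

theorem div_two_mul_rpow_two_mul_sub_one {s y : ℝ} (α : ℝ) (hs : 0 ≤ s) (hy : 0 < y) :
    (s / (2 * y)) ^ (2 * α - 1) = 2 ^ (-(2 * α)) * (2 * y) * (s ^ (2 * α - 1) * (y ^ 2) ^ (-α)) := by
  have h2y : (0 : ℝ) < 2 * y := by positivity
  rw [Real.div_rpow hs h2y.le, ← Real.rpow_natCast y 2, ← Real.rpow_mul hy.le,
    Real.rpow_sub_one h2y.ne', Real.mul_rpow zero_le_two hy.le]
  push_cast
  rw [show (2 : ℝ) * -α = -(2 * α) by ring, Real.rpow_neg hy.le, Real.rpow_neg zero_le_two]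
  field_simp

theorem IB_eq_integral_sq (ν α : ℝ) (f : ℝ → ℝ) {x : ℝ} (hx : 0 ≤ x) :
    IB ν α f x =
      ((2 : ℝ) ^ (-(2 * α)) / Real.Gamma (2 * α)) *
        ∫ t in Ioi (x ^ 2), (t - x ^ 2) ^ (2 * α - 1) * t ^ (-α) *
          gaussHyp (α + (ν - 1) / 2) α (2 * α) (1 - x ^ 2 / t) * f (Real.sqrt t) := by
  rw [IB, ← integral_comp_sq_Ioi _ hx, one_div_mul_eq_div, div_mul_eq_mul_div,
    ← integral_const_mul]
  congr 1
  refine setIntegral_congr_fun measurableSet_Ioi fun y hy => ?_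
  have hy0 : 0 < y := hx.trans_lt hy
  have hyx : 0 ≤ y ^ 2 - x ^ 2 := by nlinarith [mem_Ioi.mp hy]
  rw [div_two_mul_rpow_two_mul_sub_one α hyx hy0, Real.sqrt_sq hy0.le, smul_eq_mul]
  ring

theorem saigo_rpow_mul (γ β η p : ℝ) (g : ℝ → ℝ) {x : ℝ} (hx : 0 ≤ x) :
    saigo γ β η (fun t => t ^ p * g t) x =
      (1 / Real.Gamma γ) *
        ∫ t in Ioi x, (t - x) ^ (γ - 1) * t ^ (p - γ - β) *
          gaussHyp (γ + β) (-η) γ (1 - x / t) * g t := by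
  rw [saigo]
  congr 1
  refine setIntegral_congr_fun measurableSet_Ioi fun t ht => ?_
  rw [show p - γ - β = -γ - β + p by ring, Real.rpow_add (hx.trans_lt ht)]
  ring

theorem IB_eq_saigo_general (ν α x : ℝ) (hx : 0 < x) (f : ℝ → ℝ) :
    IB ν α f x =
      (2 : ℝ) ^ (-(2 * α)) *
        saigo (2 * α) ((ν - 1) / 2 - α) (-α) (fun t => t ^ ((ν - 1) / 2) * f (Real.sqrt t)) (x ^ 2) ∧
    IB ν α f x =
      ((2 : ℝ) ^ (-(2 * α)) / Real.Gamma (2 * α)) *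
        ∫ t in Ioi (x ^ 2), (t - x ^ 2) ^ (2 * α - 1) * t ^ (-α) *
          gaussHyp (α + (ν - 1) / 2) α (2 * α) (1 - x ^ 2 / t) * f (Real.sqrt t) := by
  have hIB := IB_eq_integral_sq ν α f hx.le
  refine ⟨?_, hIB⟩
  rw [hIB, saigo_rpow_mul _ _ _ _ _ (sq_nonneg x),
    show (ν - 1) / 2 - 2 * α - ((ν - 1) / 2 - α) = -α by ring,
    show 2 * α + ((ν - 1) / 2 - α) = α + (ν - 1) / 2 by ring, neg_neg]
  ring

theorem IB_eq_saigo (ν α x : ℝ) (hν : 0 ≤ ν) (hα : 0 < α) (hx : 0 < x)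
    (f : ℝ → ℝ) (hf : Continuous f) (hsupp : HasCompactSupport f)
    (hsupp' : tsupport f ⊆ Ioi (0 : ℝ)) :
    IB ν α f x =
      (2 : ℝ) ^ (-(2 * α)) *
        saigo (2 * α) ((ν - 1) / 2 - α) (-α) (fun t => t ^ ((ν - 1) / 2) * f (Real.sqrt t)) (x ^ 2) ∧
    IB ν α f x =
      ((2 : ℝ) ^ (-(2 * α)) / Real.Gamma (2 * α)) *
        ∫ t in Ioi (x ^ 2), (t - x ^ 2) ^ (2 * α - 1) * t ^ (-α) *
          gaussHyp (α + (ν - 1) / 2) α (2 * α) (1 - x ^ 2 / t) * f (Real.sqrt t) :=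
  IB_eq_saigo_general ν α x hx f
end
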